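/- arXiv:0808.2659 — 5 statements merged into one kernel-verified Lean document; each statement's English description precedes it below -/
import Mathlib

section
/- Let p be a prime, r, n, k ≥ 1 and 0 ≤ i < r. Let z ∈ Z_{p^r}^n be such that every coordinate of z lies in p^i·Z_{p^r} and at least one coordinate of z does not lie in p^{i+1}·Z_{p^r}. Then the number of matrices Φ ∈ M_{k×n}(Z_{p^r}) with Φ·z = 0 equals p^{r·k·n − (r−i)·k}; equivalently, if Φ is chosen uniformly at random from M_{k×n}(Z_{p^r}), then the probability that Φ·z = 0 is p^{−(r−i)·k}. -/
lemma aux_nonunit (p r : ℕ) (hp : p.Prime) (a : ZMod (p ^ r))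
    (h : ¬ IsUnit a) : ∃ b : ZMod (p ^ r), a = (p : ZMod (p ^ r)) * b := by
  haveI : NeZero (p ^ r) := ⟨pow_ne_zero r hp.pos.ne'⟩
  have h1 : ¬ (a.val).Coprime (p ^ r) := by
    intro hc
    exact h (by simpa [ZMod.natCast_val, ZMod.cast_id] using (ZMod.isUnit_iff_coprime a.val (p^r)).2 hc)
  have h2 : p ∣ a.val := by
    by_contra h2
    exact h1 (Nat.Coprime.pow_right r ((hp.coprime_iff_not_dvd.2 h2).symm))
  obtain ⟨c, hc⟩ := h2
  exact ⟨(c : ZMod (p ^ r)), by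
    have : ((a.val : ℕ) : ZMod (p ^ r)) = a := by simp [ZMod.natCast_val, ZMod.cast_id]
    rw [← this, hc]; push_cast; ring⟩

lemma aux_ker (p r n i : ℕ) (hp : p.Prime) (hn : 1 ≤ n)
    (hi : i < r) (z : Fin n → ZMod (p ^ r))
    (hz1 : ∀ j, ∃ x : ZMod (p ^ r), z j = (p : ZMod (p ^ r)) ^ i * x)
    (hz2 : ∃ j, ¬ ∃ x : ZMod (p ^ r), z j = (p : ZMod (p ^ r)) ^ (i + 1) * x) :
    Nat.card {v : Fin n → ZMod (p ^ r) // dotProduct v z = 0}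
      = p ^ (r * n - (r - i)) := by
  haveI : NeZero (p ^ r) := ⟨pow_ne_zero r hp.pos.ne'⟩
  choose x hx using hz1
  obtain ⟨j₀, hj₀⟩ := hz2
  have hunit : IsUnit (x j₀) := by
    by_contra h
    obtain ⟨b, hb⟩ := aux_nonunit p r hp (x j₀) h
    exact hj₀ ⟨b, by rw [hx j₀, hb]; ring⟩
  obtain ⟨w, hw⟩ := hunit.exists_right_inv
  set f : (Fin n → ZMod (p ^ r)) →+ ZMod (p ^ r) :=
    { toFun := fun v => dotProduct v z
      map_zero' := zero_dotProduct z
      map_add' := fun a b => add_dotProduct a b z } with hf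
  have hrange : f.range = AddSubgroup.zmultiples ((p : ZMod (p ^ r)) ^ i) := by
    apply le_antisymm
    · rintro _ ⟨v, rfl⟩
      have : f v = (∑ j, v j * x j) * (p : ZMod (p ^ r)) ^ i := by
        simp only [hf, AddMonoidHom.coe_mk, ZeroHom.coe_mk, dotProduct,
          Finset.sum_mul]
        refine Finset.sum_congr rfl fun j _ => by rw [hx j]; ring
      rw [this]
      set c := ∑ j, v j * x j
      refine ⟨(c.val : ℤ), ?_⟩
      simp only [natCast_zsmul, nsmul_eq_mul]
      rw [ZMod.natCast_val, ZMod.cast_id]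
    · rw [AddSubgroup.zmultiples_le]
      refine ⟨Pi.single j₀ w, ?_⟩
      simp only [hf, AddMonoidHom.coe_mk, ZeroHom.coe_mk, dotProduct]
      rw [Finset.sum_eq_single j₀]
      · rw [Pi.single_eq_same, hx j₀]
        calc w * ((p : ZMod (p ^ r))^i * x j₀)
              = (p : ZMod (p ^ r))^i * (x j₀ * w) := by ring
          _ = (p : ZMod (p ^ r))^i := by rw [hw, mul_one]
      · intro b _ hb; rw [Pi.single_eq_of_ne hb, zero_mul]
      · intro hb; exact absurd (Finset.mem_univ j₀) hb
  have hcard_range : Nat.card f.range = p ^ (r - i) := by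
    rw [hrange, Nat.card_zmultiples]
    have : ((p : ZMod (p ^ r)) ^ i) = ((p ^ i : ℕ) : ZMod (p ^ r)) := by push_cast; ring
    rw [this, ZMod.addOrderOf_coe _ (pow_ne_zero r hp.pos.ne'),
      Nat.gcd_eq_right (pow_dvd_pow p hi.le), Nat.pow_div hi.le hp.pos]
  have hcard_tot : Nat.card (Fin n → ZMod (p ^ r)) = p ^ (r * n) := by
    rw [Nat.card_pi]
    simp only [Nat.card_zmod, Finset.prod_const, Finset.card_univ, Fintype.card_fin]
    rw [← pow_mul]
  have hmain : Nat.card (Fin n → ZMod (p ^ r)) = Nat.card f.range * Nat.card f.ker := by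
    rw [AddSubgroup.card_eq_card_quotient_mul_card_addSubgroup f.ker,
      Nat.card_congr (QuotientAddGroup.quotientKerEquivRange f).toEquiv]
  have hker : Nat.card f.ker = p ^ (r * n - (r - i)) := by
    have hle : r - i ≤ r * n := le_trans (Nat.sub_le r i) (Nat.le_mul_of_pos_right r hn)
    have : p ^ (r - i) * Nat.card f.ker = p ^ (r - i) * p ^ (r * n - (r - i)) := by
      rw [← pow_add, Nat.add_sub_cancel' hle, ← hcard_range, ← hmain, hcard_tot]
    exact Nat.eq_of_mul_eq_mul_left (pow_pos hp.pos _) this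
  rw [← hker]
  exact Nat.card_congr (Equiv.subtypeEquivRight (fun v => by
    simp [hf, AddMonoidHom.mem_ker]))

theorem stmt2 (p r n k i : ℕ) (hp : p.Prime) (hr : 1 ≤ r) (hn : 1 ≤ n) (hk : 1 ≤ k)
    (hi : i < r) (z : Fin n → ZMod (p ^ r))
    (hz1 : ∀ j, ∃ x : ZMod (p ^ r), z j = (p : ZMod (p ^ r)) ^ i * x)
    (hz2 : ∃ j, ¬ ∃ x : ZMod (p ^ r), z j = (p : ZMod (p ^ r)) ^ (i + 1) * x) :
    Nat.card {Φ : Matrix (Fin k) (Fin n) (ZMod (p ^ r)) // Φ.mulVec z = 0}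
        = p ^ (r * k * n - (r - i) * k) ∧
    (Nat.card {Φ : Matrix (Fin k) (Fin n) (ZMod (p ^ r)) // Φ.mulVec z = 0} : ℝ)
          / (Nat.card (Matrix (Fin k) (Fin n) (ZMod (p ^ r))) : ℝ)
        = ((p : ℝ) ^ ((r - i) * k))⁻¹ := by
  haveI : NeZero (p ^ r) := ⟨pow_ne_zero r hp.pos.ne'⟩
  have e1 : {Φ : Matrix (Fin k) (Fin n) (ZMod (p ^ r)) // Φ.mulVec z = 0}
      ≃ (Fin k → {v : Fin n → ZMod (p ^ r) // dotProduct v z = 0}) :=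
    (Equiv.subtypeEquivRight (fun Φ => by
      constructor
      · intro h a; exact congrFun h a
      · intro h; funext a; exact h a)).trans Equiv.subtypePiEquivPi
  have harith : (r * n - (r - i)) * k = r * k * n - (r - i) * k := by
    rw [Nat.sub_mul]; congr 1; ring
  have h1 : Nat.card {Φ : Matrix (Fin k) (Fin n) (ZMod (p ^ r)) // Φ.mulVec z = 0}
      = p ^ (r * k * n - (r - i) * k) := by
    rw [Nat.card_congr e1, Nat.card_pi, aux_ker p r n i hp hn hi z hz1 hz2]
    simp only [Finset.prod_const, Finset.card_univ, Fintype.card_fin]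
    rw [← pow_mul, harith]
  have h2 : Nat.card (Matrix (Fin k) (Fin n) (ZMod (p ^ r))) = p ^ (r * k * n) := by
    have h2' : Nat.card (Matrix (Fin k) (Fin n) (ZMod (p ^ r)))
        = Nat.card (Fin k → Fin n → ZMod (p ^ r)) := rfl
    rw [h2', Nat.card_pi]
    simp only [Nat.card_pi, Nat.card_zmod, Finset.prod_const, Finset.card_univ,
      Fintype.card_fin]
    rw [← pow_mul, ← pow_mul]
    ring_nf
  have hle : (r - i) * k ≤ r * k * n := by
    calc (r - i) * k ≤ r * k := Nat.mul_le_mul_right k (Nat.sub_le r i)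
      _ ≤ r * k * n := Nat.le_mul_of_pos_right _ hn
  refine ⟨h1, ?_⟩
  rw [h1, h2]
  have hp0 : (p : ℝ) ≠ 0 := Nat.cast_ne_zero.2 hp.pos.ne'
  push_cast
  rw [div_eq_iff (pow_ne_zero _ hp0), inv_mul_eq_div,
    eq_div_iff (pow_ne_zero _ hp0), ← pow_add, Nat.sub_add_cancel hle]
end

section
/- Let p be a prime, r, n, k ≥ 1, let u1, u2 ∈ Z_{p^r}^n be non-redundant vectors, and suppose D(u1,u2) = p^i·Z_{p^r} for some 0 ≤ i ≤ r. Then the number of matrices Φ ∈ M_{k×n}(Z_{p^r}) with Φ·u1 = 0 and Φ·u2 = 0 equals p^{r·k·n − (2r−i)·k}; equivalently, if Φ is chosen uniformly at random from M_{k×n}(Z_{p^r}), then the probability that Φ·u1 = 0 and Φ·u2 = 0 is p^{−(2r−i)·k}. -/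
/-- The additive subgroup `p^i · Z_{p^r} = {p^i * x : x ∈ Z_{p^r}}` of `Z_{p^r}`. -/
def pZ (p r i : ℕ) : AddSubgroup (ZMod (p ^ r)) where
  carrier := Set.range (fun x : ZMod (p ^ r) => (p : ZMod (p ^ r)) ^ i * x)
  add_mem' := by rintro a b ⟨x, rfl⟩ ⟨y, rfl⟩; exact ⟨x + y, by ring⟩
  zero_mem' := ⟨0, by ring⟩
  neg_mem' := by rintro a ⟨x, rfl⟩; exact ⟨-x, by ring⟩

/-- `D(u1,u2)`: the smallest additive subgroup of `Z_{p^r}` containing all the determinants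
`m_{k,l}(u1,u2) = u1_k·u2_l − u2_k·u1_l` with `k ≠ l` and `u1_k` a unit. -/
def Dgrp {p r n : ℕ} (u1 u2 : Fin n → ZMod (p ^ r)) : AddSubgroup (ZMod (p ^ r)) :=
  AddSubgroup.closure
    {m | ∃ k l : Fin n, k ≠ l ∧ IsUnit (u1 k) ∧ m = u1 k * u2 l - u2 k * u1 l}

open Matrix in
lemma card_pZ (p r i : ℕ) (hp : p.Prime) (hi : i ≤ r) (hr : 1 ≤ r) :
    Nat.card (pZ p r i) = p ^ (r - i) := by
  haveI : NeZero (p ^ r) := ⟨pow_ne_zero r hp.ne_zero⟩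
  have h1 : pZ p r i = AddSubgroup.zmultiples ((p : ZMod (p ^ r)) ^ i) := by
    ext x
    constructor
    · rintro ⟨y, rfl⟩
      obtain ⟨m, rfl⟩ := ZMod.natCast_zmod_surjective y
      exact ⟨(m : ℤ), by simp [natCast_zsmul, nsmul_eq_mul]; ring⟩
    · rintro ⟨m, rfl⟩
      refine ⟨(m : ZMod (p ^ r)), ?_⟩
      show (p : ZMod (p^r)) ^ i * _ = m • _
      rw [zsmul_eq_mul]; ring
  rw [h1, Nat.card_zmultiples]
  have h2 : ((p : ZMod (p ^ r)) ^ i) = ((p ^ i : ℕ) : ZMod (p ^ r)) := by push_cast; ring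
  rw [h2, ZMod.addOrderOf_coe _ (pow_ne_zero r hp.ne_zero),
    Nat.gcd_eq_right (pow_dvd_pow p hi), Nat.pow_div hi hp.pos]

open Matrix

lemma mul_mem_trick {N : ℕ} [NeZero N] (H : AddSubgroup (ZMod N)) {x : ZMod N} (hx : x ∈ H)
    (c : ZMod N) : c * x ∈ H := by
  obtain ⟨m, rfl⟩ := ZMod.natCast_zmod_surjective c
  rw [← nsmul_eq_mul]
  exact AddSubgroup.nsmul_mem H hx m

lemma row_count (p r n i : ℕ) (hp : p.Prime) (hr : 1 ≤ r) (hi : i ≤ r)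
    (u1 u2 : Fin n → ZMod (p ^ r)) (hu1 : ∃ j, IsUnit (u1 j))
    (hD : Dgrp u1 u2 = pZ p r i)
    (hcD : Nat.card (pZ p r i) = p ^ (r - i)) :
    p ^ (r - i) * Nat.card {v : Fin n → ZMod (p ^ r) // v ⬝ᵥ u1 = 0 ∧ v ⬝ᵥ u2 = 0}
      = p ^ (r * (n - 1)) := by
  haveI : NeZero (p ^ r) := ⟨pow_ne_zero r hp.ne_zero⟩
  obtain ⟨a, ha⟩ := hu1
  set t : ZMod (p ^ r) := ↑ha.unit⁻¹ with htdef
  have ht : u1 a * t = 1 := by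
    rw [htdef]
    exact_mod_cast ha.mul_val_inv
  set c : Fin n → ZMod (p ^ r) := fun l => u1 a * u2 l - u2 a * u1 l with hc
  have hca : c a = 0 := by simp only [hc]; ring
  have hsplit : ∀ F : Fin n → ZMod (p ^ r),
      (∑ l, F l) = F a + ∑ l : {l : Fin n // l ≠ a}, F l.val := by
    intro F
    rw [← Finset.add_sum_erase _ _ (Finset.mem_univ a)]
    congr 1
    exact Finset.sum_subtype _ (by simp) _
  set g : ({l : Fin n // l ≠ a} → ZMod (p ^ r)) →+ ZMod (p ^ r) :=
    { toFun := fun w => ∑ l : {l : Fin n // l ≠ a}, w l * c l.val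
      map_zero' := by simp
      map_add' := by intro w1 w2; simp [add_mul, Finset.sum_add_distrib] } with hg
  have hgapp : ∀ w, g w = ∑ l : {l : Fin n // l ≠ a}, w l * c l.val := fun w => rfl
  have hrange : g.range = Dgrp u1 u2 := by
    apply le_antisymm
    · rintro x ⟨w, rfl⟩
      rw [hgapp]
      refine AddSubgroup.sum_mem _ fun l _ => mul_mem_trick _ ?_ _
      exact AddSubgroup.subset_closure ⟨a, l.val, Ne.symm l.2, ha, rfl⟩
    · rw [Dgrp]
      refine (AddSubgroup.closure_le _).mpr ?_
      rintro x ⟨k0, l0, hkl, hku, rfl⟩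
      have hterm : ∀ (z : ZMod (p ^ r)) (j : Fin n), z * c j ∈ g.range := by
        intro z j
        by_cases hj : j = a
        · subst hj; rw [hca, mul_zero]; exact zero_mem _
        · refine ⟨Pi.single ⟨j, hj⟩ z, ?_⟩
          rw [hgapp]
          rw [Finset.sum_eq_single (⟨j, hj⟩ : {l : Fin n // l ≠ a})]
          · simp
          · intro b _ hb; rw [Pi.single_eq_of_ne hb, zero_mul]
          · intro h; exact absurd (Finset.mem_univ _) h
      have key : u1 k0 * u2 l0 - u2 k0 * u1 l0
          = (t * u1 k0) * c l0 - (t * u1 l0) * c k0 := by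
        simp only [hc]
        linear_combination (u1 l0 * u2 k0 - u1 k0 * u2 l0) * ht
      rw [key, sub_eq_add_neg, ← neg_mul]
      exact add_mem (hterm _ _) (hterm _ _)
  have hXfull : ∀ v : Fin n → ZMod (p ^ r),
      (∑ l, v l * c l) = u1 a * (v ⬝ᵥ u2) - u2 a * (v ⬝ᵥ u1) := by
    intro v
    simp only [dotProduct, Finset.mul_sum, ← Finset.sum_sub_distrib]
    exact Finset.sum_congr rfl fun l _ => by simp only [hc]; ring
  set e : {v : Fin n → ZMod (p ^ r) // v ⬝ᵥ u1 = 0 ∧ v ⬝ᵥ u2 = 0} ≃ g.ker :=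
    { toFun := fun v => ⟨fun l => v.1 l.val, by
        have h0 : (∑ l, v.1 l * c l) = 0 := by
          rw [hXfull, v.2.1, v.2.2]; ring
        rw [hsplit (fun l => v.1 l * c l), hca, mul_zero, zero_add] at h0
        exact AddMonoidHom.mem_ker.mpr ((hgapp _).trans h0)⟩
      invFun := fun w => ⟨fun l => if h : l = a
            then -(t * ∑ l' : {l : Fin n // l ≠ a}, w.1 l' * u1 l'.val)
            else w.1 ⟨l, h⟩, by
          set S : ZMod (p ^ r) := ∑ l' : {l : Fin n // l ≠ a}, w.1 l' * u1 l'.val with hS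
          set v : Fin n → ZMod (p ^ r) :=
            fun l => if h : l = a then -(t * S) else w.1 ⟨l, h⟩ with hv
          have hva : v a = -(t * S) := by simp only [hv, dif_pos]
          have hvl : ∀ l : {l : Fin n // l ≠ a}, v l.val = w.1 l := by
            intro l; simp only [hv, dif_neg l.2]
          have hd1 : v ⬝ᵥ u1 = 0 := by
            rw [dotProduct, hsplit (fun l => v l * u1 l), hva]
            have hsum : (∑ l : {l : Fin n // l ≠ a}, v l.val * u1 l.val) = S := by
              rw [hS]; exact Finset.sum_congr rfl fun l _ => by rw [hvl]
            rw [hsum]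
            linear_combination (-(S)) * ht
          refine ⟨hd1, ?_⟩
          have hker : (∑ l : {l : Fin n // l ≠ a}, w.1 l * c l.val) = 0 :=
            (hgapp w.1).symm.trans (AddMonoidHom.mem_ker.mp w.2)
          have hfull : (∑ l, v l * c l) = 0 := by
            rw [hsplit (fun l => v l * c l), hca, mul_zero, zero_add, ← hker]
            exact Finset.sum_congr rfl fun l _ => by rw [hvl]
          rw [hXfull, hd1, mul_zero, sub_zero] at hfull
          calc v ⬝ᵥ u2 = (u1 a * t) * (v ⬝ᵥ u2) := by rw [ht, one_mul]
          _ = t * (u1 a * (v ⬝ᵥ u2)) := by ring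
          _ = 0 := by rw [hfull, mul_zero]⟩
      left_inv := by
        rintro ⟨v, hv1, hv2⟩
        apply Subtype.ext
        funext l
        show (if h : l = a then _ else _) = v l
        by_cases hl : l = a
        · rw [dif_pos hl, hl]
          have h0 : (∑ j, v j * u1 j) = 0 := hv1
          rw [hsplit (fun j => v j * u1 j)] at h0
          have hsum : (∑ l' : {l : Fin n // l ≠ a}, v l'.val * u1 l'.val)
              = -(v a * u1 a) := by linear_combination h0
          rw [hsum]
          linear_combination (v a) * ht
        · rw [dif_neg hl]
      right_inv := by
        rintro ⟨w, hw⟩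
        apply Subtype.ext
        funext l
        exact dif_neg l.2 }
  rw [Nat.card_congr e]
  have hiso := AddSubgroup.card_eq_card_quotient_mul_card_addSubgroup (g.ker)
  have hquot : Nat.card (({l : Fin n // l ≠ a} → ZMod (p ^ r)) ⧸ g.ker) = Nat.card g.range :=
    Nat.card_congr (QuotientAddGroup.quotientKerEquivRange g).toEquiv
  have hdom : Nat.card ({l : Fin n // l ≠ a} → ZMod (p ^ r)) = p ^ (r * (n - 1)) := by
    rw [Nat.card_fun, Nat.card_zmod, Nat.card_eq_fintype_card]
    rw [Fintype.card_subtype_compl, Fintype.card_subtype_eq, Fintype.card_fin, ← pow_mul]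
  rw [hquot, hrange, hD, hcD, hdom] at hiso
  exact hiso.symm

theorem stmt3 (p r n k i : ℕ) (hp : p.Prime) (hr : 1 ≤ r) (hn : 1 ≤ n) (hk : 1 ≤ k)
    (hi : i ≤ r) (u1 u2 : Fin n → ZMod (p ^ r))
    (hu1 : ∃ j, IsUnit (u1 j)) (hu2 : ∃ j, IsUnit (u2 j))
    (hD : Dgrp u1 u2 = pZ p r i) :
    Nat.card {Φ : Matrix (Fin k) (Fin n) (ZMod (p ^ r)) //
          Φ.mulVec u1 = 0 ∧ Φ.mulVec u2 = 0}
        = p ^ (r * k * n - (2 * r - i) * k) ∧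
    (Nat.card {Φ : Matrix (Fin k) (Fin n) (ZMod (p ^ r)) //
          Φ.mulVec u1 = 0 ∧ Φ.mulVec u2 = 0} : ℝ)
          / (Nat.card (Matrix (Fin k) (Fin n) (ZMod (p ^ r))) : ℝ)
        = ((p : ℝ) ^ ((2 * r - i) * k))⁻¹ := by
  haveI : NeZero (p ^ r) := ⟨pow_ne_zero r hp.ne_zero⟩
  obtain ⟨m, rfl⟩ : ∃ m, n = m + 1 := ⟨n - 1, by omega⟩
  have hrow := row_count p r (m + 1) i hp hr hi u1 u2 hu1 hD (card_pZ p r i hp hi hr)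
  simp only [Nat.add_sub_cancel] at hrow
  set N := Nat.card {v : Fin (m + 1) → ZMod (p ^ r) // v ⬝ᵥ u1 = 0 ∧ v ⬝ᵥ u2 = 0} with hNdef
  -- N = p ^ (r * m - (r - i))
  have hdvd : p ^ (r - i) ∣ p ^ (r * m) := ⟨N, hrow.symm⟩
  have hle : r - i ≤ r * m := (Nat.pow_dvd_pow_iff_le_right hp.one_lt).mp hdvd
  have hN : N = p ^ (r * m - (r - i)) := by
    have h2 : p ^ (r - i) * p ^ (r * m - (r - i)) = p ^ (r * m) := by
      rw [← pow_add]; congr 1; omega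
    exact Nat.eq_of_mul_eq_mul_left (pow_pos hp.pos _) (hrow.trans h2.symm)
  -- matrix count
  have e2 : {Φ : Matrix (Fin k) (Fin (m + 1)) (ZMod (p ^ r)) //
        Φ.mulVec u1 = 0 ∧ Φ.mulVec u2 = 0}
      ≃ (Fin k → {v : Fin (m + 1) → ZMod (p ^ r) // v ⬝ᵥ u1 = 0 ∧ v ⬝ᵥ u2 = 0}) :=
    { toFun := fun Φ => fun j => ⟨fun l => Φ.1 j l,
        by
          constructor
          · have := congrFun Φ.2.1 j
            simpa [Matrix.mulVec, dotProduct] using this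
          · have := congrFun Φ.2.2 j
            simpa [Matrix.mulVec, dotProduct] using this⟩
      invFun := fun f => ⟨Matrix.of (fun j l => (f j).1 l),
        by
          constructor
          · funext j
            have := (f j).2.1
            simpa [Matrix.mulVec, dotProduct] using this
          · funext j
            have := (f j).2.2
            simpa [Matrix.mulVec, dotProduct] using this⟩
      left_inv := fun Φ => Subtype.ext rfl
      right_inv := fun f => funext fun j => Subtype.ext rfl }
  have hcard : Nat.card {Φ : Matrix (Fin k) (Fin (m + 1)) (ZMod (p ^ r)) //
        Φ.mulVec u1 = 0 ∧ Φ.mulVec u2 = 0} = N ^ k := by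
    rw [Nat.card_congr e2, Nat.card_fun, ← hNdef]
    congr 1
    simp [Nat.card_eq_fintype_card]
  -- exponent facts
  have hle2 : (2 * r - i) * k ≤ r * k * (m + 1) := by
    have h1 : 2 * r - i ≤ r * m + r := by omega
    calc (2 * r - i) * k ≤ (r * m + r) * k := Nat.mul_le_mul_right k h1
    _ = r * k * (m + 1) := by ring
  have hexp : (r * m - (r - i)) * k = r * k * (m + 1) - (2 * r - i) * k := by
    have hle' : (r - i) * k ≤ r * m * k := Nat.mul_le_mul_right k hle
    zify [hle, hle', hi, hle2, show i ≤ 2 * r by omega]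
    ring
  have hmain : Nat.card {Φ : Matrix (Fin k) (Fin (m + 1)) (ZMod (p ^ r)) //
        Φ.mulVec u1 = 0 ∧ Φ.mulVec u2 = 0} = p ^ (r * k * (m + 1) - (2 * r - i) * k) := by
    rw [hcard, hN, ← pow_mul, hexp]
  refine ⟨hmain, ?_⟩
  have hMat : Nat.card (Matrix (Fin k) (Fin (m + 1)) (ZMod (p ^ r))) = p ^ (r * k * (m + 1)) := by
    rw [Nat.card_congr (Matrix.of (m := Fin k) (n := Fin (m + 1)) (α := ZMod (p ^ r))).symm,
      Nat.card_fun, Nat.card_fun, Nat.card_zmod, Nat.card_eq_fintype_card,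
      Nat.card_eq_fintype_card, Fintype.card_fin, Fintype.card_fin, ← pow_mul, ← pow_mul]
    congr 1; ring
  rw [hmain, hMat]
  push_cast
  have key : (p : ℝ) ^ (r * k * (m + 1))
      = (p : ℝ) ^ (r * k * (m + 1) - (2 * r - i) * k) * (p : ℝ) ^ ((2 * r - i) * k) := by
    rw [← pow_add]
    congr 1
    exact (Nat.sub_add_cancel hle2).symm
  rw [key, div_mul_cancel_left₀ (pow_ne_zero _ (Nat.cast_ne_zero.mpr hp.ne_zero))]
end

section
/- Let 𝒰 and 𝒱 be finite nonempty sets with |𝒰| = α and |𝒱| = β, let 𝒢 be a set, and let G : 𝒰 × 𝒱 → 𝒢 be a surjective function. Then there exist injective maps S_U : 𝒰 → Z_α ⊕ Z_β and S_V : 𝒱 → Z_α ⊕ Z_β and a surjective map S_G : Z_α ⊕ Z_β → 𝒢 such that S_G(S_U(u) + S_V(v)) = G(u,v) for all (u,v) ∈ 𝒰 × 𝒱. In particular, any function of two variables is embeddable in an abelian group of order α·β. -/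
open Function

def IsEmbeddableIn {𝒰 𝒱 𝒢 : Type*} (A : Type*) [Add A] (G : 𝒰 × 𝒱 → 𝒢) : Prop :=
  ∃ (SU : 𝒰 → A) (SV : 𝒱 → A) (SG : A → 𝒢),
    Injective SU ∧ Injective SV ∧ Surjective SG ∧ ∀ u v, SG (SU u + SV v) = G (u, v)

theorem isEmbeddableIn_prod_of_equiv {𝒰 𝒱 𝒢 A B : Type*} [AddZeroClass A] [AddZeroClass B]
    (eU : 𝒰 ≃ A) (eV : 𝒱 ≃ B) {G : 𝒰 × 𝒱 → 𝒢} (hG : Surjective G) :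
    IsEmbeddableIn (A × B) G :=
  ⟨fun u => (eU u, 0), fun v => (0, eV v), G ∘ (eU.prodCongr eV).symm,
    (Prod.mk_left_injective 0).comp eU.injective,
    (Prod.mk_right_injective 0).comp eV.injective,
    hG.comp (eU.prodCongr eV).symm.surjective,
    fun u v => by simp⟩

theorem stmt6 {𝒰 𝒱 𝒢 : Type*} [Fintype 𝒰] [Fintype 𝒱] [Nonempty 𝒰] [Nonempty 𝒱]
    (α β : ℕ) (hα : Fintype.card 𝒰 = α) (hβ : Fintype.card 𝒱 = β)
    (G : 𝒰 × 𝒱 → 𝒢) (hG : Function.Surjective G) :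
    ∃ (SU : 𝒰 → ZMod α × ZMod β) (SV : 𝒱 → ZMod α × ZMod β)
      (SG : ZMod α × ZMod β → 𝒢),
      Function.Injective SU ∧ Function.Injective SV ∧ Function.Surjective SG ∧
      ∀ u v, SG (SU u + SV v) = G (u, v) := by
  -- `ZMod 0 = ℤ` is infinite, so `ZMod.card` needs the cardinalities to be nonzero.
  have : NeZero α := ⟨hα ▸ Fintype.card_ne_zero⟩
  have : NeZero β := ⟨hβ ▸ Fintype.card_ne_zero⟩
  exact isEmbeddableIn_prod_of_equiv
    (Fintype.equivOfCardEq (by rw [ZMod.card, hα]))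
    (Fintype.equivOfCardEq (by rw [ZMod.card, hβ])) hG
end

section
/- Let p be a prime, r ≥ 1, and 0 ≤ i ≤ r. Let Z, S, W be random variables on a finite probability space, with Z and W taking values in Z_{p^r}, S taking values in a finite set 𝒮, and W taking values in p^i·Z_{p^r} almost surely. Suppose the pair (Z + W, S) has the same joint distribution as (Z, S), where addition is in Z_{p^r}. Then H(W | Z, S) ≤ H(Z | S) − H([Z]_i | S). -/
/-!
Since `w ↦ z + w` is injective, `H(W | Z, S) = H(Z + W | Z, S)`, and conditioning on the
coarser pair `([Z]_i, S)` can only increase this (Gibbs' inequality). As `W ∈ p^i·Z_{p^r}`,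
`[Z]_i = [Z + W]_i`, so `(Z + W, [Z]_i, S)` carries the same information as `(Z + W, S)`,
whose law is that of `(Z, S)`. Hence
`H(Z + W | [Z]_i, S) = H(Z, S) - H([Z]_i, S) = H(Z | S) - H([Z]_i | S)`.
-/

open scoped Classical

noncomputable section

/-- Base-2 Shannon entropy of a probability mass function on a finite type
(with the convention `0 · log 0 = 0`, automatic since `Real.logb 2 0 = 0`). -/
def ent {A : Type*} [Fintype A] (P : A → ℝ) : ℝ :=
  -∑ a, P a * Real.logb 2 (P a)

/-- Distribution (pushforward pmf) of a random variable `X` on a finite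
probability space with weights `μ`. -/
def distOf {Ω A : Type*} [Fintype Ω] (μ : Ω → ℝ) (X : Ω → A) : A → ℝ :=
  fun a => ∑ ω, if X ω = a then μ ω else 0

/-- Entropy `H(X)` of a random variable `X` on a finite probability space. -/
def Hent {Ω A : Type*} [Fintype Ω] [Fintype A] (μ : Ω → ℝ) (X : Ω → A) : ℝ :=
  ent (distOf μ X)

/-- Conditional entropy `H(X | Y) = H(X,Y) − H(Y)`. -/
def condEnt {Ω A B : Type*} [Fintype Ω] [Fintype A] [Fintype B]
    (μ : Ω → ℝ) (X : Ω → A) (Y : Ω → B) : ℝ :=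
  Hent μ (fun ω => (X ω, Y ω)) - Hent μ Y

instance {G : Type*} [AddGroup G] [Finite G] (H : AddSubgroup G) : Fintype (G ⧸ H) :=
  Fintype.ofFinite _

instance {G : Type*} [AddGroup G] [Finite G] (H : AddSubgroup G) : Fintype H :=
  Fintype.ofFinite _

/-- A sequence `x ∈ A^n` is strongly `ε`-typical for the pmf `Q` if each empirical
frequency is within `ε` of `Q a`, and symbols of zero probability never occur. -/
def StronglyTypical {A : Type*} [Fintype A] {n : ℕ} (Q : A → ℝ)
    (x : Fin n → A) (ε : ℝ) : Prop :=
  ∀ a : A,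
    |((Finset.univ.filter (fun j => x j = a)).card : ℝ) / n - Q a| ≤ ε ∧
    (Q a = 0 → (Finset.univ.filter (fun j => x j = a)).card = 0)

section Distribution

variable {Ω A B : Type*} [Fintype Ω] {μ : Ω → ℝ}

lemma distOf_nonneg (hμ : ∀ ω, 0 ≤ μ ω) (X : Ω → A) (a : A) : 0 ≤ distOf μ X a :=
  Finset.sum_nonneg fun ω _ => by split_ifs <;> simp [hμ ω]

lemma le_distOf_self (hμ : ∀ ω, 0 ≤ μ ω) (X : Ω → A) (ω : Ω) : μ ω ≤ distOf μ X (X ω) := by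
  simpa [distOf] using Finset.single_le_sum (f := fun ω' => if X ω' = X ω then μ ω' else 0)
    (fun ω' _ => by split_ifs <;> simp [hμ ω']) (Finset.mem_univ ω)

lemma distOf_congr_ae {X X' : Ω → A} (h : ∀ ω, μ ω ≠ 0 → X ω = X' ω) :
    distOf μ X = distOf μ X' := by
  funext a
  refine Finset.sum_congr rfl fun ω _ => ?_
  by_cases hω : μ ω = 0
  · simp [hω]
  · rw [h ω hω]

lemma sum_distOf_mul [Fintype A] (μ : Ω → ℝ) (X : Ω → A) (φ : A → ℝ) :
    ∑ a, distOf μ X a * φ a = ∑ ω, μ ω * φ (X ω) := by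
  simp_rw [distOf, Finset.sum_mul, ite_mul, zero_mul]
  rw [Finset.sum_comm]
  simp [Finset.sum_ite_eq]

lemma sum_distOf [Fintype A] (μ : Ω → ℝ) (X : Ω → A) : ∑ a, distOf μ X a = ∑ ω, μ ω := by
  simpa using sum_distOf_mul μ X 1

lemma sum_distOf_prod_left [Fintype A] (μ : Ω → ℝ) (X : Ω → A) (Y : Ω → B) (b : B) :
    ∑ a, distOf μ (fun ω => (X ω, Y ω)) (a, b) = distOf μ Y b := by
  simp only [distOf, Prod.mk.injEq, ite_and]
  rw [Finset.sum_comm]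
  simp [Finset.sum_ite_eq]

end Distribution

lemma sum_mul_log_le_sum_mul_log {ι : Type*} [Fintype ι] {f u : ι → ℝ} (hf : ∀ i, 0 ≤ f i)
    (hu : ∀ i, 0 ≤ u i) (hpos : ∀ i, 0 < f i → 0 < u i) (hsum : ∑ i, u i ≤ ∑ i, f i) :
    ∑ i, f i * Real.log (u i) ≤ ∑ i, f i * Real.log (f i) := by
  have key : ∀ i, f i * Real.log (u i) - f i * Real.log (f i) ≤ u i - f i := by
    intro i
    rcases (hf i).eq_or_lt with h0 | h0
    · simp [← h0, hu i]
    · calc f i * Real.log (u i) - f i * Real.log (f i)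
          = f i * Real.log (u i / f i) := by
            rw [Real.log_div (hpos i h0).ne' h0.ne']; ring
        _ ≤ f i * (u i / f i - 1) :=
            mul_le_mul_of_nonneg_left
              (Real.log_le_sub_one_of_pos (div_pos (hpos i h0) h0)) h0.le
        _ = u i - f i := by field_simp
  have := Finset.sum_le_sum fun i (_ : i ∈ Finset.univ) => key i
  simp only [Finset.sum_sub_distrib] at this
  linarith

section Entropy

variable {Ω A B C : Type*} [Fintype Ω] [Fintype A] [Fintype B] [Fintype C] {μ : Ω → ℝ}

lemma Hent_eq_sum (μ : Ω → ℝ) (X : Ω → A) :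
    Hent μ X = -∑ ω, μ ω * Real.logb 2 (distOf μ X (X ω)) := by
  rw [Hent, ent, sum_distOf_mul]

lemma Hent_comp_of_injective (μ : Ω → ℝ) (X : Ω → A) {f : A → B} (hf : f.Injective) :
    Hent μ (fun ω => f (X ω)) = Hent μ X := by
  have hdist : ∀ a, distOf μ (fun ω => f (X ω)) (f a) = distOf μ X a := by
    simp [distOf, hf.eq_iff]
  simp only [Hent_eq_sum, hdist]

lemma condEnt_comp_of_injective (μ : Ω → ℝ) (X : Ω → A) (Y : Ω → B) {φ : B → A → C}
    (hφ : ∀ b, (φ b).Injective) :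
    condEnt μ (fun ω => φ (Y ω) (X ω)) Y = condEnt μ X Y := by
  have hf : (fun x : A × B => (φ x.2 x.1, x.2)).Injective := fun x y h => by
    simp only [Prod.mk.injEq] at h
    obtain ⟨h1, h2⟩ := h
    rw [h2] at h1
    exact Prod.ext (hφ _ h1) h2
  rw [condEnt, condEnt, Hent_comp_of_injective μ (fun ω => (X ω, Y ω)) hf]

lemma sum_mul_logb_le_sum_mul_logb_distOf (hμ : ∀ ω, 0 ≤ μ ω) (V : Ω → A) {u : A → ℝ}
    (hu : ∀ a, 0 ≤ u a) (hpos : ∀ ω, 0 < μ ω → 0 < u (V ω)) (hsum : ∑ a, u a ≤ ∑ ω, μ ω) :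
    ∑ ω, μ ω * Real.logb 2 (u (V ω)) ≤ ∑ ω, μ ω * Real.logb 2 (distOf μ V (V ω)) := by
  have hpos' : ∀ a, 0 < distOf μ V a → 0 < u a := by
    intro a ha
    by_contra hua
    refine ha.not_ge (Finset.sum_nonpos fun ω _ => ?_)
    split_ifs with hVa
    · exact not_lt.mp fun hω => hua (hVa ▸ hpos ω hω)
    · exact le_rfl
  have gibbs := sum_mul_log_le_sum_mul_log (distOf_nonneg hμ V) hu hpos'
    (by rwa [sum_distOf])
  rw [← sum_distOf_mul μ V (fun a => Real.logb 2 (u a)),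
    ← sum_distOf_mul μ V (fun a => Real.logb 2 (distOf μ V a))]
  simp_rw [Real.logb, ← mul_div_assoc, ← Finset.sum_div]
  exact div_le_div_of_nonneg_right gibbs (Real.log_nonneg one_le_two)

lemma condEnt_le_condEnt_comp (hμ : ∀ ω, 0 ≤ μ ω) (X : Ω → A) (Y : Ω → B) (g : B → C) :
    condEnt μ X Y ≤ condEnt μ X (fun ω => g (Y ω)) := by
  set pY := distOf μ Y
  set pC := distOf μ (fun ω => g (Y ω))
  set pXC := distOf μ (fun ω => (X ω, g (Y ω)))
  -- `u` is the law of `(X, Y)` under which `X` and `Y` are independent given `g Y`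
  set u : A × B → ℝ := fun x => pY x.2 * pXC (x.1, g x.2) / pC (g x.2)
  have hu : ∀ x, 0 ≤ u x := fun x => div_nonneg
    (mul_nonneg (distOf_nonneg hμ _ _) (distOf_nonneg hμ _ _)) (distOf_nonneg hμ _ _)
  have hpos : ∀ ω, 0 < μ ω →
      0 < pY (Y ω) ∧ 0 < pXC (X ω, g (Y ω)) ∧ 0 < pC (g (Y ω)) := fun ω hω =>
    ⟨hω.trans_le (le_distOf_self hμ _ ω), hω.trans_le (le_distOf_self hμ _ ω),
      hω.trans_le (le_distOf_self hμ _ ω)⟩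
  have hsum : ∑ x, u x ≤ ∑ ω, μ ω := by
    rw [← sum_distOf μ Y, Fintype.sum_prod_type_right]
    refine Finset.sum_le_sum fun b _ => ?_
    simp only [u, mul_div_assoc, ← Finset.mul_sum, ← Finset.sum_div, pXC, pC,
      sum_distOf_prod_left]
    exact mul_le_of_le_one_right (distOf_nonneg hμ _ _) (div_self_le_one _)
  have hlog : ∀ ω, μ ω * Real.logb 2 (u (X ω, Y ω)) = μ ω * Real.logb 2 (pY (Y ω))
      + μ ω * Real.logb 2 (pXC (X ω, g (Y ω))) - μ ω * Real.logb 2 (pC (g (Y ω))) := by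
    intro ω
    rcases (hμ ω).eq_or_lt with h0 | h0
    · simp [← h0]
    · obtain ⟨h1, h2, h3⟩ := hpos ω h0
      simp only [u]
      rw [Real.logb_div (mul_pos h1 h2).ne' h3.ne', Real.logb_mul h1.ne' h2.ne']
      ring
  have gibbs := sum_mul_logb_le_sum_mul_logb_distOf hμ (fun ω => (X ω, Y ω)) hu
    (fun ω hω => by obtain ⟨h1, h2, h3⟩ := hpos ω hω; exact div_pos (mul_pos h1 h2) h3) hsum
  simp only [hlog, Finset.sum_add_distrib, Finset.sum_sub_distrib] at gibbs
  simp only [condEnt, Hent_eq_sum]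
  linarith

end Entropy

lemma condEnt_le_sub_condEnt_of_distOf_add_eq {Ω A B Q : Type*} [Fintype Ω] [Fintype A]
    [Fintype B] [Fintype Q] [AddGroup A] {μ : Ω → ℝ} (hμ : ∀ ω, 0 ≤ μ ω)
    (Z W : Ω → A) (S : Ω → B) (π : A → Q) (hπ : ∀ ω, μ ω ≠ 0 → π (Z ω + W ω) = π (Z ω))
    (hsame : distOf μ (fun ω => (Z ω + W ω, S ω)) = distOf μ (fun ω => (Z ω, S ω))) :
    condEnt μ W (fun ω => (Z ω, S ω)) ≤ condEnt μ Z S - condEnt μ (fun ω => π (Z ω)) S := by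
  have hjoint : Hent μ (fun ω => (Z ω + W ω, (π (Z ω), S ω))) = Hent μ (fun ω => (Z ω, S ω)) :=
    calc Hent μ (fun ω => (Z ω + W ω, (π (Z ω), S ω)))
        = Hent μ (fun ω => (Z ω + W ω, (π (Z ω + W ω), S ω))) :=
          congrArg ent (distOf_congr_ae fun ω hω => by rw [hπ ω hω])
      _ = Hent μ (fun ω => (Z ω + W ω, S ω)) :=
          Hent_comp_of_injective μ (fun ω => (Z ω + W ω, S ω))
            (f := fun x => (x.1, (π x.1, x.2))) fun x y h => by
              simp only [Prod.mk.injEq] at h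
              exact Prod.ext h.1 h.2.2
      _ = Hent μ (fun ω => (Z ω, S ω)) := congrArg ent hsame
  calc condEnt μ W (fun ω => (Z ω, S ω))
      = condEnt μ (fun ω => Z ω + W ω) (fun ω => (Z ω, S ω)) :=
        (condEnt_comp_of_injective μ W (fun ω => (Z ω, S ω)) (φ := fun y w => y.1 + w)
          fun y => add_right_injective y.1).symm
    _ ≤ condEnt μ (fun ω => Z ω + W ω) (fun ω => (π (Z ω), S ω)) :=
        condEnt_le_condEnt_comp hμ _ (fun ω => (Z ω, S ω)) (fun y => (π y.1, y.2))
    _ = condEnt μ Z S - condEnt μ (fun ω => π (Z ω)) S := by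
        simp only [condEnt, hjoint]
        ring

theorem stmt7_general (p r i : ℕ) [NeZero (p ^ r)]
    {Ω 𝒮 : Type*} [Fintype Ω] [Fintype 𝒮]
    (μ : Ω → ℝ) (hμ0 : ∀ ω, 0 ≤ μ ω)
    (Z W : Ω → ZMod (p ^ r)) (S : Ω → 𝒮)
    (hW : ∀ ω, μ ω ≠ 0 → W ω ∈ pZ p r i)
    (hsame : distOf μ (fun ω => (Z ω + W ω, S ω)) = distOf μ (fun ω => (Z ω, S ω))) :
    condEnt μ W (fun ω => (Z ω, S ω)) ≤
      condEnt μ Z S -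
        condEnt μ (fun ω => ((QuotientAddGroup.mk (Z ω)) : ZMod (p ^ r) ⧸ pZ p r i)) S :=
  condEnt_le_sub_condEnt_of_distOf_add_eq hμ0 Z W S QuotientAddGroup.mk
    (fun ω hω => QuotientAddGroup.mk_add_of_mem _ (hW ω hω)) hsame

theorem stmt7 (p r i : ℕ) (hp : p.Prime) (hr : 1 ≤ r) (hi : i ≤ r) [NeZero (p ^ r)]
    {Ω 𝒮 : Type*} [Fintype Ω] [Fintype 𝒮]
    (μ : Ω → ℝ) (hμ0 : ∀ ω, 0 ≤ μ ω) (hμ1 : ∑ ω, μ ω = 1)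
    (Z W : Ω → ZMod (p ^ r)) (S : Ω → 𝒮)
    (hW : ∀ ω, μ ω ≠ 0 → W ω ∈ pZ p r i)
    (hsame : distOf μ (fun ω => (Z ω + W ω, S ω)) = distOf μ (fun ω => (Z ω, S ω))) :
    condEnt μ W (fun ω => (Z ω, S ω)) ≤
      condEnt μ Z S -
        condEnt μ (fun ω => ((QuotientAddGroup.mk (Z ω)) : ZMod (p ^ r) ⧸ pZ p r i)) S :=
  stmt7_general p r i μ hμ0 Z W S hW hsame

end
end

section
/- Let p be a prime, r ≥ 1, 0 ≤ i ≤ r, 𝒮 a finite set, and P_{ZS} a probability mass function on Z_{p^r} × 𝒮; let (Z,S) ~ P_{ZS}. For z^n ∈ Z_{p^r}^n, s^n ∈ 𝒮^n and ε > 0, define S_{i,ε}(z^n, s^n) = {z̃ ∈ Z_{p^r}^n : z̃ − z^n ∈ (p^i·Z_{p^r})^n and the pair (z̃, s^n) is strongly ε-typical for P_{ZS}}. Then for every δ > 0 there exists ε₀ > 0 such that for every 0 < ε ≤ ε₀ there exists N such that for all n ≥ N and all pairs (z^n, s^n) that are strongly ε-typical for P_{ZS}, |S_{i,ε}(z^n,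 s^n)| ≤ 2^{n·(H(Z|S) − H([Z]_i|S) + δ)}. -/
open scoped Classical

noncomputable section

/-!
Let `W(z, s) = P(z, s) / P([z]_i, s)` be the conditional pmf of `Z` given `([Z]_i, S)`.
Along a strongly `ε`-typical sequence `(z̃, s)` each symbol occurs about `n P(a)` times,
so `∏ⱼ W(z̃ⱼ, sⱼ) ≥ 2^{-n (H(Z|S) - H([Z]_i|S) + ε C)}` with `C = ∑ₐ |log W(a)|`.
On the other hand all `z̃ ≡ z` (mod `p^i`) have the same images `([z̃ⱼ]_i, sⱼ)`, and the sum
of `∏ⱼ W(z̃ⱼ, sⱼ)` over all sequences with these images factors into `n` sums of conditional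
probabilities over a fibre, so it is at most `1`. Taking `ε C ≤ δ` bounds the count.
-/

open Finset Real

def condPmf {Ω B : Type*} [Fintype Ω] (P : Ω → ℝ) (q : Ω → B) (a : Ω) : ℝ :=
  P a / distOf P q (q a)

section CondPmf

variable {Ω B : Type*} [Fintype Ω] {P : Ω → ℝ} {q : Ω → B}

lemma distOf_eq_sum_filter (P : Ω → ℝ) (q : Ω → B) (b : B) :
    distOf P q b = ∑ a with q a = b, P a :=
  (sum_filter _ _).symm

lemma distOf_nonneg_s9 (hP : ∀ a, 0 ≤ P a) (b : B) : 0 ≤ distOf P q b :=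
  sum_nonneg fun a _ => ite_nonneg (hP a) le_rfl

lemma le_distOf_apply (hP : ∀ a, 0 ≤ P a) (a : Ω) : P a ≤ distOf P q (q a) := by
  rw [distOf_eq_sum_filter]
  exact single_le_sum (fun a _ => hP a) (by simp)

lemma condPmf_nonneg (hP : ∀ a, 0 ≤ P a) (a : Ω) : 0 ≤ condPmf P q a :=
  div_nonneg (hP a) (distOf_nonneg_s9 hP _)

lemma condPmf_pos (hP : ∀ a, 0 ≤ P a) {a : Ω} (ha : 0 < P a) : 0 < condPmf P q a :=
  div_pos ha (ha.trans_le (le_distOf_apply hP a))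

lemma sum_condPmf_fiber_le_one (hP : ∀ a, 0 ≤ P a) (b : B) :
    ∑ a with q a = b, condPmf P q a ≤ 1 := by
  rw [sum_congr rfl fun a ha => by rw [condPmf, (mem_filter.1 ha).2], ← sum_div,
    ← distOf_eq_sum_filter]
  exact div_le_one_of_le₀ le_rfl (distOf_nonneg_s9 hP b)

lemma sum_prod_condPmf_le_one (hP : ∀ a, 0 ≤ P a) {n : ℕ} (y : Fin n → B) :
    ∑ x : Fin n → Ω with ∀ j, q (x j) = y j, ∏ j, condPmf P q (x j) ≤ 1 :=
  calc ∑ x : Fin n → Ω with ∀ j, q (x j) = y j, ∏ j, condPmf P q (x j)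
      = ∑ x : Fin n → Ω, ∏ j, if q (x j) = y j then condPmf P q (x j) else 0 := by
        simp only [sum_filter, Fintype.prod_ite_zero]
        congr!
    _ = ∏ j, ∑ a with q a = y j, condPmf P q a := by
        simp only [Fintype.prod_sum, sum_filter]
    _ ≤ 1 := prod_le_one (fun j _ => sum_nonneg fun a _ => condPmf_nonneg hP a)
        fun j _ => sum_condPmf_fiber_le_one hP (y j)

lemma sum_mul_logb_condPmf [Fintype B] (hP : ∀ a, 0 ≤ P a) :
    ∑ a, P a * logb 2 (condPmf P q a) = ent (distOf P q) - ent P := by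
  have hsplit : ∀ a, P a * logb 2 (condPmf P q a)
      = P a * logb 2 (P a) - P a * logb 2 (distOf P q (q a)) := by
    intro a
    rcases (hP a).eq_or_lt with ha | ha
    · simp [← ha]
    · rw [condPmf, logb_div ha.ne' (ha.trans_le (le_distOf_apply hP a)).ne', mul_sub]
  have hfiber : ∑ a, P a * logb 2 (distOf P q (q a))
      = ∑ b, distOf P q b * logb 2 (distOf P q b) := by
    rw [← sum_fiberwise univ q]
    refine sum_congr rfl fun b _ => ?_
    rw [sum_congr rfl fun a ha => by rw [(mem_filter.1 ha).2], ← sum_mul,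
      ← distOf_eq_sum_filter]
  simp only [hsplit, sum_sub_distrib, hfiber, ent]
  ring

end CondPmf

section StronglyTypical

variable {A : Type*} [Fintype A] {n : ℕ} {Q : A → ℝ} {x : Fin n → A} {ε : ℝ}

lemma StronglyTypical.abs_card_sub_le (hx : StronglyTypical Q x ε) (a : A) :
    |(#{j | x j = a} : ℝ) - n * Q a| ≤ n * ε := by
  rcases n.eq_zero_or_pos with rfl | hn
  · simp
  · have hn' : (0 : ℝ) < n := Nat.cast_pos.2 hn
    have hscale : (#{j | x j = a} : ℝ) - n * Q a = n * (#{j | x j = a} / n - Q a) := by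
      field_simp
    rw [hscale, abs_mul, abs_of_pos hn']
    exact mul_le_mul_of_nonneg_left (hx a).1 hn'.le

lemma StronglyTypical.rpow_le_prod (hx : StronglyTypical Q x ε) (w : A → ℝ)
    (hw : ∀ a, Q a ≠ 0 → 0 < w a) :
    (2 : ℝ) ^ (n * ∑ a, Q a * logb 2 (w a) - n * ε * ∑ a, |logb 2 (w a)|)
      ≤ ∏ j, w (x j) := by
  have hprod : ∏ j, w (x j) = 2 ^ ∑ a, (#{j | x j = a} : ℝ) * logb 2 (w a) := by
    rw [← prod_fiberwise univ x, rpow_sum_of_pos two_pos]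
    refine prod_congr rfl fun a _ => ?_
    rw [prod_congr rfl fun j hj => by rw [(mem_filter.1 hj).2], prod_const]
    rcases Nat.eq_zero_or_pos #{j | x j = a} with h0 | hpos
    · simp [h0]
    · have hQ : Q a ≠ 0 := fun hQ => hpos.ne' ((hx a).2 hQ)
      rw [mul_comm, rpow_mul zero_le_two, rpow_logb two_pos one_lt_two.ne' (hw a hQ),
        rpow_natCast]
  have hterm : ∀ a, n * (Q a * logb 2 (w a)) - n * ε * |logb 2 (w a)|
      ≤ #{j | x j = a} * logb 2 (w a) := by
    intro a
    have hdev : |(#{j | x j = a} - n * Q a) * logb 2 (w a)| ≤ n * ε * |logb 2 (w a)| := by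
      rw [abs_mul]
      exact mul_le_mul_of_nonneg_right (hx.abs_card_sub_le a) (abs_nonneg _)
    linarith [neg_abs_le ((#{j | x j = a} - n * Q a) * logb 2 (w a))]
  rw [hprod, mul_sum, mul_sum, ← sum_sub_distrib]
  exact rpow_le_rpow_of_exponent_le one_le_two (sum_le_sum fun a _ => hterm a)

end StronglyTypical

theorem card_stronglyTypical_fiber_le {Ω B : Type*} [Fintype Ω] [Fintype B] {P : Ω → ℝ}
    (hP : ∀ a, 0 ≤ P a) (q : Ω → B) (ε : ℝ) {n : ℕ} (y : Fin n → B) :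
    (Nat.card {x : Fin n → Ω // (∀ j, q (x j) = y j) ∧ StronglyTypical P x ε} : ℝ)
      ≤ 2 ^ (n * (ent P - ent (distOf P q)) + n * ε * ∑ a, |logb 2 (condPmf P q a)|) := by
  set e := n * (ent P - ent (distOf P q)) + n * ε * ∑ a, |logb 2 (condPmf P q a)|
  rw [Nat.card_eq_fintype_card, Fintype.card_subtype]
  set T := ({x | (∀ j, q (x j) = y j) ∧ StronglyTypical P x ε} : Finset (Fin n → Ω))
  have hlow : ∀ x ∈ T, (2 : ℝ) ^ (-e) ≤ ∏ j, condPmf P q (x j) := by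
    intro x hx
    have h := (mem_filter.1 hx).2.2.rpow_le_prod (condPmf P q)
      fun a ha => condPmf_pos hP ((hP a).lt_of_ne' ha)
    rw [sum_mul_logb_condPmf hP] at h
    convert h using 2
    simp only [e]
    ring
  have hsum : (#T : ℝ) * 2 ^ (-e) ≤ 1 :=
    calc (#T : ℝ) * 2 ^ (-e) ≤ ∑ x ∈ T, ∏ j, condPmf P q (x j) := by
          simpa using card_nsmul_le_sum T _ _ hlow
      _ ≤ ∑ x : Fin n → Ω with ∀ j, q (x j) = y j, ∏ j, condPmf P q (x j) :=
          sum_le_sum_of_subset_of_nonneg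
            (fun x hx => mem_filter.2 ⟨mem_univ x, (mem_filter.1 hx).2.1⟩)
            fun x _ _ => prod_nonneg fun j _ => condPmf_nonneg hP _
      _ ≤ 1 := sum_prod_condPmf_le_one hP y
  rwa [rpow_neg zero_le_two, ← div_eq_mul_inv, div_le_one (rpow_pos_of_pos two_pos _)] at hsum

lemma condEnt_sub_condEnt_map_fst {A S B : Type*} [Fintype A] [Fintype S] [Fintype B]
    (P : A × S → ℝ) (f : A → B) :
    condEnt P Prod.fst Prod.snd - condEnt P (fun ω => f ω.1) Prod.snd
      = ent P - ent (distOf P fun ω => (f ω.1, ω.2)) := by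
  have hP : distOf P (fun ω => (ω.1, ω.2)) = P := by
    ext a
    simp [distOf]
  simp only [condEnt, Hent, hP]
  ring

theorem stmt9_general (p r i : ℕ) [NeZero (p ^ r)]
    {𝒮 : Type*} [Fintype 𝒮]
    (P : ZMod (p ^ r) × 𝒮 → ℝ) (hP0 : ∀ zs, 0 ≤ P zs) :
    ∀ δ > (0 : ℝ), ∃ ε₀ > (0 : ℝ), ∀ ε : ℝ, 0 < ε → ε ≤ ε₀ → ∃ N : ℕ, ∀ n ≥ N,
      ∀ (z : Fin n → ZMod (p ^ r)) (s : Fin n → 𝒮),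
        StronglyTypical P (fun j => (z j, s j)) ε →
        (Nat.card {zt : Fin n → ZMod (p ^ r) //
              (∀ j, zt j - z j ∈ pZ p r i) ∧
              StronglyTypical P (fun j => (zt j, s j)) ε} : ℝ)
          ≤ 2 ^ ((n : ℝ) *
              (condEnt P Prod.fst Prod.snd
                - condEnt P
                    (fun zs => ((QuotientAddGroup.mk zs.1) : ZMod (p ^ r) ⧸ pZ p r i))
                    Prod.snd + δ)) := by
  intro δ hδ
  set q : ZMod (p ^ r) × 𝒮 → (ZMod (p ^ r) ⧸ pZ p r i) × 𝒮 := fun ω => (ω.1, ω.2)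
  set C := ∑ a, |logb 2 (condPmf P q a)|
  have hC : 0 ≤ C := sum_nonneg fun a _ => abs_nonneg _
  refine ⟨δ / (C + 1), by positivity, fun ε hε hεδ => ⟨0, fun n _ z s _ => ?_⟩⟩
  have hεC : ε * C ≤ δ := by
    rw [le_div_iff₀ (by positivity)] at hεδ
    nlinarith
  let pairWith : {zt : Fin n → ZMod (p ^ r) // (∀ j, zt j - z j ∈ pZ p r i) ∧
        StronglyTypical P (fun j => (zt j, s j)) ε} →
      {x : Fin n → ZMod (p ^ r) × 𝒮 // (∀ j, q (x j) = q (z j, s j)) ∧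
        StronglyTypical P x ε} := fun zt =>
    ⟨fun j => (zt.1 j, s j),
      fun j => Prod.ext (QuotientAddGroup.eq_iff_sub_mem.2 (zt.2.1 j)) rfl, zt.2.2⟩
  have hembed := Nat.card_le_card_of_injective pairWith
    fun zt zt' h => Subtype.ext (funext fun j => congr_arg (fun x => (x.1 j).1) h)
  refine (Nat.cast_le.2 hembed).trans ((card_stronglyTypical_fiber_le hP0 q ε _).trans ?_)
  rw [condEnt_sub_condEnt_map_fst]
  gcongr
  · exact one_le_two
  · nlinarith [mul_le_mul_of_nonneg_left hεC (Nat.cast_nonneg n)]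

theorem stmt9 (p r i : ℕ) (hp : p.Prime) (hr : 1 ≤ r) (hi : i ≤ r) [NeZero (p ^ r)]
    {𝒮 : Type*} [Fintype 𝒮]
    (P : ZMod (p ^ r) × 𝒮 → ℝ) (hP0 : ∀ zs, 0 ≤ P zs) (hP1 : ∑ zs, P zs = 1) :
    ∀ δ > (0 : ℝ), ∃ ε₀ > (0 : ℝ), ∀ ε : ℝ, 0 < ε → ε ≤ ε₀ → ∃ N : ℕ, ∀ n ≥ N,
      ∀ (z : Fin n → ZMod (p ^ r)) (s : Fin n → 𝒮),
        StronglyTypical P (fun j => (z j, s j)) ε →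
        (Nat.card {zt : Fin n → ZMod (p ^ r) //
              (∀ j, zt j - z j ∈ pZ p r i) ∧
              StronglyTypical P (fun j => (zt j, s j)) ε} : ℝ)
          ≤ 2 ^ ((n : ℝ) *
              (condEnt P Prod.fst Prod.snd
                - condEnt P
                    (fun zs => ((QuotientAddGroup.mk zs.1) : ZMod (p ^ r) ⧸ pZ p r i))
                    Prod.snd + δ)) :=
  stmt9_general p r i P hP0

end
end
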